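/- For natural numbers a and b, the number of Young diagrams that fit inside the a × b rectangular box (i.e., Young diagrams all of whose cells (i,j) satisfy i < a and j < b) equals the binomial coefficient C(a + b, a). -/

import Mathlib

/-!
Padding its row lengths with zeros, a Young diagram in the `a × b` box is the same as a weakly
decreasing sequence of `a` numbers in `{0, …, b}`, i.e. a multiset of size `a` drawn from `b + 1`
elements. Stars and bars counts these as `C((b + 1) + a - 1, a) = C(a + b, a)`.
-/

def List.sortedGEEquivSym (α : Type*) [LinearOrder α] (n : ℕ) :
    {l : List α // l.length = n ∧ l.SortedGE} ≃ Sym α n where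
  toFun l := ⟨l.1, by simpa using l.2.1⟩
  invFun s := ⟨s.1.sort (· ≥ ·), by simp, (s.1.pairwise_sort _).sortedGE⟩
  left_inv l := Subtype.ext <| List.Perm.eq_of_sortedGE
    (Multiset.pairwise_sort (l.1 : Multiset α) (· ≥ ·)).sortedGE l.2.2
    (Multiset.coe_eq_coe.mp (Multiset.sort_eq (l.1 : Multiset α) (· ≥ ·)))
  right_inv s := Sym.coe_injective (Multiset.sort_eq _ _)

namespace YoungDiagram

theorem rowLen_le_of_forall_snd_lt {μ : YoungDiagram} {b : ℕ} (hμ : ∀ c ∈ μ.cells, c.2 < b)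
    (i : ℕ) : μ.rowLen i ≤ b :=
  not_lt.mp fun h => (hμ _ (mem_iff_lt_rowLen.mpr h)).false

def boxEquivSortedGE (a b : ℕ) :
    {μ : YoungDiagram // ∀ c ∈ μ.cells, c.1 < a ∧ c.2 < b} ≃
      {l : List (Fin (b + 1)) // l.length = a ∧ l.SortedGE} where
  toFun μ := ⟨List.ofFn fun i : Fin a =>
      ⟨μ.1.rowLen i, Nat.lt_succ_of_le (rowLen_le_of_forall_snd_lt (fun c hc => (μ.2 c hc).2) i)⟩,
    List.length_ofFn, List.sortedGE_ofFn_iff.mpr fun i j hij => μ.1.rowLen_anti i j hij⟩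
  invFun l := ⟨ofRowLens (l.1.map Fin.val) (l.2.2.pairwise.map Fin.val fun _ _ h => h).sortedGE, by
    rintro ⟨i, j⟩ hc
    obtain ⟨hi, hj⟩ := mem_ofRowLens.mp hc
    simp only [List.length_map, l.2.1, List.getElem_map] at hi hj
    exact ⟨hi, hj.trans_le (Nat.lt_succ_iff.mp (l.1[i]).2)⟩⟩
  left_inv μ := by
    apply Subtype.ext
    ext ⟨i, j⟩
    simp only [mem_cells, mem_ofRowLens, List.length_map, List.length_ofFn, List.getElem_map,
      List.getElem_ofFn]
    exact ⟨fun ⟨_, h⟩ => mem_iff_lt_rowLen.mpr h, fun h => ⟨(μ.2 _ h).1, mem_iff_lt_rowLen.mp h⟩⟩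
  right_inv l := by
    apply Subtype.ext
    refine List.ext_getElem (by simp [l.2.1]) fun i _ h₂ => Fin.ext ?_
    simpa using rowLen_ofRowLens (w := l.1.map Fin.val) ⟨i, by simpa using h₂⟩

end YoungDiagram

/-- The number of Young diagrams fitting inside the `a × b` rectangular box
(i.e. all of whose cells `(i,j)` satisfy `i < a` and `j < b`) equals the
binomial coefficient `C(a + b, a)`. -/
theorem card_young_in_box (a b : ℕ) :
    Nat.card {μ : YoungDiagram // ∀ c ∈ μ.cells, c.1 < a ∧ c.2 < b} =
      Nat.choose (a + b) a := by
  rw [Nat.card_congr ((YoungDiagram.boxEquivSortedGE a b).trans (List.sortedGEEquivSym _ a)),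
    Nat.card_eq_fintype_card, Sym.card_sym_eq_choose, Fintype.card_fin]
  congr 1
  omega
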